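/- arXiv:2203.02675 — 3 statements merged into one kernel-verified Lean document; each statement's English description precedes it below -/
import Mathlib

section
/- For every real a > 0, the integral from 0 to infinity of (e^(−at)/t − 2·e^(−(a + 1/2)t)/(t·(1 + e^(−t)))) dt equals 2·ln(√2·Γ(a/2 + 3/4)/(√a·Γ(a/2 + 1/4))). -/
/-!
Write `I a` for the integral and `R a` for the right-hand side. With `x = exp (-t / 2)` the
integrand is `exp (-a t) (1 - x)² / (t (1 + x²))`, so `I a - I (a + 2)` has integrand
`exp (-a t) (1 - x)² (1 - x²) / t`, and `(1 - x)² (1 - x²) = (1 - x) - (x - x³) + (x³ - x⁴)`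
splits it into three Frullani integrals with sum `log ((a + 1/2)² (a + 2) / (a (a + 3/2)²))`.
The functional equation of `Γ` gives the same difference for `R`. Both `I` and `R` tend to `0`
at infinity: `I a ≤ log ((a + 1/2) / a)`, and log-convexity of `Γ` squeezes
`Γ (x + 1/2)² / (x Γ(x)²)` between `x / (x + 1/2)` and `1`. Hence `I - R`, being invariant
under `a ↦ a + 2`, vanishes.
-/

open Real MeasureTheory Set Filter Topology

lemma tendsto_add_div_self_atTop (c : ℝ) : Tendsto (fun x : ℝ => (x + c) / x) atTop (𝓝 1) := by
  have h : Tendsto (fun x : ℝ => 1 + c * x⁻¹) atTop (𝓝 (1 + c * 0)) :=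
    tendsto_const_nhds.add (tendsto_inv_atTop_zero.const_mul c)
  rw [mul_zero, add_zero] at h
  refine h.congr' ?_
  filter_upwards [eventually_ne_atTop 0] with x hx
  field_simp

lemma eq_of_forall_add_eq_of_tendsto {α : Type*} [TopologicalSpace α] [T2Space α] {f : ℝ → α}
    {c x : ℝ} {L : α} (hc : 0 < c) (hf : ∀ y, x ≤ y → f (y + c) = f y)
    (hlim : Tendsto f atTop (𝓝 L)) : f x = L := by
  have hconst : ∀ n : ℕ, f (x + n * c) = f x := by
    intro n
    induction n with
    | zero => simp
    | succ n ih =>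
      rw [Nat.cast_succ, add_one_mul, ← add_assoc,
        hf _ (le_add_of_nonneg_right (by positivity)), ih]
  have hseq : Tendsto (fun n : ℕ => x + n * c) atTop atTop :=
    tendsto_atTop_add_const_left _ _ (tendsto_natCast_atTop_atTop.atTop_mul_const hc)
  exact tendsto_nhds_unique tendsto_const_nhds ((hlim.comp hseq).congr hconst)

section Frullani

variable {p q : ℝ}

lemma exp_neg_mul_sub_exp_neg_mul_div_le {t : ℝ} (ht : 0 < t) :
    (exp (-(p * t)) - exp (-(q * t))) / t ≤ (q - p) * exp (-(p * t)) := by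
  have hsplit : exp (-(q * t)) = exp (-(p * t)) * exp (-((q - p) * t)) := by
    rw [← exp_add]; ring_nf
  have hlin : 1 - exp (-((q - p) * t)) ≤ (q - p) * t := by
    linarith [add_one_le_exp (-((q - p) * t))]
  rw [div_le_iff₀ ht, hsplit]
  nlinarith [exp_pos (-(p * t))]

lemma integrableOn_exp_neg_mul_sub_exp_neg_mul_div (hp : 0 < p) (hq : 0 < q) :
    IntegrableOn (fun t => (exp (-(p * t)) - exp (-(q * t))) / t) (Ioi 0) := by
  wlog hpq : p ≤ q generalizing p q
  · simpa only [Pi.neg_def, ← neg_div, neg_sub] using (this hq hp (le_of_not_ge hpq)).neg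
  refine ((exp_neg_integrableOn_Ioi 0 hp).const_mul (q - p)).mono'
    (Measurable.aestronglyMeasurable (by fun_prop)) ?_
  filter_upwards [ae_restrict_mem measurableSet_Ioi] with t (ht : 0 < t)
  have hnonneg : 0 ≤ (exp (-(p * t)) - exp (-(q * t))) / t :=
    div_nonneg (sub_nonneg.2 (exp_le_exp.2 (by nlinarith))) ht.le
  rw [norm_of_nonneg hnonneg, neg_mul]
  exact exp_neg_mul_sub_exp_neg_mul_div_le ht

lemma integral_exp_neg_mul_sub_exp_neg_mul_div (hp : 0 < p) (hq : 0 < q) :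
    ∫ t in Ioi 0, (exp (-(p * t)) - exp (-(q * t))) / t = log (q / p) := by
  have hcont : Continuous fun x : ℝ => exp (-x) := by fun_prop
  have h := Frullani.integral_Ioi_eq (L := 1) (R := 0)
    (hcont.locallyIntegrable.locallyIntegrableOn (Ioi 0)) hp hq
    ?_ tendsto_exp_neg_atTop_nhds_zero ?_
  · simpa only [smul_eq_mul, inv_mul_eq_div, sub_zero, mul_one] using h
  · simpa using (hcont.tendsto 0).mono_left nhdsWithin_le_nhds
  · simpa only [smul_eq_mul, inv_mul_eq_div] using
      integrableOn_exp_neg_mul_sub_exp_neg_mul_div hp hq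

end Frullani

lemma Real.Gamma_add_div_two_sq_le {s t : ℝ} (hs : 0 < s) (ht : 0 < t) :
    Gamma ((s + t) / 2) ^ 2 ≤ Gamma s * Gamma t := by
  have h := Gamma_mul_add_mul_le_rpow_Gamma_mul_rpow_Gamma hs ht (by norm_num : (0 : ℝ) < 1 / 2)
    (by norm_num : (0 : ℝ) < 1 / 2) (by norm_num)
  have hs' := (Gamma_pos_of_pos hs).le
  have ht' := (Gamma_pos_of_pos ht).le
  calc Gamma ((s + t) / 2) ^ 2 = Gamma (1 / 2 * s + 1 / 2 * t) ^ 2 := by ring_nf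
    _ ≤ (Gamma s ^ (1 / 2 : ℝ) * Gamma t ^ (1 / 2 : ℝ)) ^ 2 :=
      pow_le_pow_left₀ (Gamma_pos_of_pos (by positivity)).le h 2
    _ = Gamma s * Gamma t := by
      rw [mul_pow, ← rpow_natCast, ← rpow_natCast, ← rpow_mul hs', ← rpow_mul ht']
      norm_num

lemma Real.Gamma_add_half_sq_le {x : ℝ} (hx : 0 < x) : Gamma (x + 1 / 2) ^ 2 ≤ x * Gamma x ^ 2 :=
  calc Gamma (x + 1 / 2) ^ 2 = Gamma ((x + (x + 1)) / 2) ^ 2 := by ring_nf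
    _ ≤ Gamma x * Gamma (x + 1) := Gamma_add_div_two_sq_le hx (by linarith)
    _ = x * Gamma x ^ 2 := by rw [Gamma_add_one hx.ne']; ring

lemma Real.sq_mul_Gamma_sq_le {x : ℝ} (hx : 0 < x) :
    x ^ 2 * Gamma x ^ 2 ≤ (x + 1 / 2) * Gamma (x + 1 / 2) ^ 2 :=
  calc x ^ 2 * Gamma x ^ 2 = Gamma ((x + 1 / 2 + (x + 1 / 2 + 1)) / 2) ^ 2 := by
        rw [show (x + 1 / 2 + (x + 1 / 2 + 1)) / 2 = x + 1 by ring, Gamma_add_one hx.ne']; ring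
    _ ≤ Gamma (x + 1 / 2) * Gamma (x + 1 / 2 + 1) :=
      Gamma_add_div_two_sq_le (by linarith) (by linarith)
    _ = (x + 1 / 2) * Gamma (x + 1 / 2) ^ 2 := by rw [Gamma_add_one (by linarith)]; ring

lemma Real.tendsto_Gamma_add_half_sq_div_atTop :
    Tendsto (fun x => Gamma (x + 1 / 2) ^ 2 / (x * Gamma x ^ 2)) atTop (𝓝 1) := by
  have hlow : Tendsto (fun x : ℝ => ((x + 1 / 2) / x)⁻¹) atTop (𝓝 1) := by
    simpa using (tendsto_add_div_self_atTop (1 / 2)).inv₀ one_ne_zero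
  refine tendsto_of_tendsto_of_tendsto_of_le_of_le' hlow tendsto_const_nhds ?_ ?_
  · filter_upwards [eventually_gt_atTop 0] with x hx
    have hΓ := Gamma_pos_of_pos hx
    rw [inv_div, div_le_div_iff₀ (by linarith) (by positivity)]
    nlinarith [sq_mul_Gamma_sq_le hx]
  · filter_upwards [eventually_gt_atTop 0] with x hx
    have hΓ := Gamma_pos_of_pos hx
    rw [div_le_one (by positivity)]
    exact Gamma_add_half_sq_le hx

namespace FrullaniType

noncomputable def integrand (a t : ℝ) : ℝ :=
  exp (-(a * t)) / t - 2 * exp (-((a + 1 / 2) * t)) / (t * (1 + exp (-t)))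

noncomputable def closedForm (a : ℝ) : ℝ :=
  2 * log (√2 * Gamma (a / 2 + 3 / 4) / (√a * Gamma (a / 2 + 1 / 4)))

lemma exp_neg_add_half_mul (a t : ℝ) (k : ℕ) :
    exp (-((a + k / 2) * t)) = exp (-(a * t)) * exp (-(t / 2)) ^ k := by
  rw [← exp_nat_mul, ← exp_add]; ring_nf

lemma integrand_eq {a t : ℝ} (ht : 0 < t) :
    integrand a t =
      exp (-(a * t)) * (1 - exp (-(t / 2))) ^ 2 / (t * (1 + exp (-(t / 2)) ^ 2)) := by
  have h1 := exp_neg_add_half_mul a t 1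
  have h2 := exp_neg_add_half_mul 0 t 2
  norm_num at h1 h2
  rw [integrand, h1, h2]
  field_simp
  ring

lemma integrand_nonneg (a : ℝ) {t : ℝ} (ht : 0 < t) : 0 ≤ integrand a t := by
  rw [integrand_eq ht]; positivity

lemma integrand_le (a : ℝ) {t : ℝ} (ht : 0 < t) :
    integrand a t ≤ (exp (-(a * t)) - exp (-((a + 1 / 2) * t))) / t := by
  have hx : exp (-(t / 2)) ≤ 1 := exp_le_one_iff.2 (by linarith)
  have hx0 := exp_pos (-(t / 2))
  have h1 := exp_neg_add_half_mul a t 1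
  norm_num at h1
  rw [integrand_eq ht, h1, ← mul_one_sub, div_le_div_iff₀ (by positivity) ht]
  have hE := exp_pos (-(a * t))
  have hquad : (1 - exp (-(t / 2))) ^ 2 ≤ (1 - exp (-(t / 2))) * (1 + exp (-(t / 2)) ^ 2) := by
    nlinarith
  nlinarith [mul_le_mul_of_nonneg_left hquad (mul_pos hE ht).le]

lemma integrableOn_integrand {a : ℝ} (ha : 0 < a) : IntegrableOn (integrand a) (Ioi 0) := by
  refine (integrableOn_exp_neg_mul_sub_exp_neg_mul_div ha (by linarith : 0 < a + 1 / 2)).mono'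
    (Measurable.aestronglyMeasurable (by unfold integrand; fun_prop)) ?_
  filter_upwards [ae_restrict_mem measurableSet_Ioi] with t (ht : 0 < t)
  rw [norm_of_nonneg (integrand_nonneg a ht)]
  exact integrand_le a ht

lemma tendsto_integral_integrand_atTop :
    Tendsto (fun a => ∫ t in Ioi 0, integrand a t) atTop (𝓝 0) := by
  have hlog : Tendsto (fun a : ℝ => log ((a + 1 / 2) / a)) atTop (𝓝 0) := by
    simpa using (tendsto_add_div_self_atTop (1 / 2)).log one_ne_zero
  refine tendsto_of_tendsto_of_tendsto_of_le_of_le' tendsto_const_nhds hlog ?_ ?_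
  · exact Eventually.of_forall fun a =>
      setIntegral_nonneg measurableSet_Ioi fun t ht => integrand_nonneg a ht
  · filter_upwards [eventually_gt_atTop 0] with a ha
    rw [← integral_exp_neg_mul_sub_exp_neg_mul_div ha (by linarith)]
    exact setIntegral_mono_on (integrableOn_integrand ha)
      (integrableOn_exp_neg_mul_sub_exp_neg_mul_div ha (by linarith)) measurableSet_Ioi
      fun t ht => integrand_le a ht

lemma integrand_sub_integrand_add_two (a : ℝ) {t : ℝ} (ht : 0 < t) :
    integrand a t - integrand (a + 2) t =
      (exp (-(a * t)) - exp (-((a + 1 / 2) * t))) / t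
        - (exp (-((a + 1 / 2) * t)) - exp (-((a + 3 / 2) * t))) / t
        + (exp (-((a + 3 / 2) * t)) - exp (-((a + 2) * t))) / t := by
  have h1 := exp_neg_add_half_mul a t 1
  have h3 := exp_neg_add_half_mul a t 3
  have h4 := exp_neg_add_half_mul a t 4
  norm_num at h1 h3 h4
  rw [integrand_eq ht, integrand_eq ht, h1, h3, h4]
  field_simp
  ring

lemma integral_integrand_sub_integral_integrand_add_two {a : ℝ} (ha : 0 < a) :
    (∫ t in Ioi 0, integrand a t) - ∫ t in Ioi 0, integrand (a + 2) t =
      log ((a + 1 / 2) / a) - log ((a + 3 / 2) / (a + 1 / 2)) + log ((a + 2) / (a + 3 / 2)) := by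
  have h₁ : 0 < a + 1 / 2 := by linarith
  have h₂ : 0 < a + 3 / 2 := by linarith
  have h₃ : 0 < a + 2 := by linarith
  have i₁ := integrableOn_exp_neg_mul_sub_exp_neg_mul_div ha h₁
  have i₂ := integrableOn_exp_neg_mul_sub_exp_neg_mul_div h₁ h₂
  have i₃ := integrableOn_exp_neg_mul_sub_exp_neg_mul_div h₂ h₃
  rw [← integral_sub (integrableOn_integrand ha) (integrableOn_integrand h₃),
    setIntegral_congr_fun measurableSet_Ioi fun t ht => integrand_sub_integrand_add_two a ht,
    integral_add ?_ i₃, integral_sub i₁ i₂, integral_exp_neg_mul_sub_exp_neg_mul_div ha h₁,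
    integral_exp_neg_mul_sub_exp_neg_mul_div h₁ h₂, integral_exp_neg_mul_sub_exp_neg_mul_div h₂ h₃]
  exact i₁.sub i₂

lemma closedForm_eq_log {a : ℝ} (ha : 0 < a) :
    closedForm a = log (2 * Gamma (a / 2 + 3 / 4) ^ 2 / (a * Gamma (a / 2 + 1 / 4) ^ 2)) := by
  have hsq : (√2 * Gamma (a / 2 + 3 / 4) / (√a * Gamma (a / 2 + 1 / 4))) ^ 2
      = 2 * Gamma (a / 2 + 3 / 4) ^ 2 / (a * Gamma (a / 2 + 1 / 4) ^ 2) := by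
    rw [div_pow, mul_pow, mul_pow, sq_sqrt zero_le_two, sq_sqrt ha.le]
  rw [closedForm, ← hsq, log_pow]
  norm_num

lemma closedForm_sub_closedForm_add_two {a : ℝ} (ha : 0 < a) :
    closedForm a - closedForm (a + 2) =
      log ((a + 1 / 2) / a) - log ((a + 3 / 2) / (a + 1 / 2)) + log ((a + 2) / (a + 3 / 2)) := by
  have hΓ₁ := Gamma_pos_of_pos (by linarith : 0 < a / 2 + 1 / 4)
  have hΓ₃ := Gamma_pos_of_pos (by linarith : 0 < a / 2 + 3 / 4)
  rw [closedForm_eq_log ha, closedForm_eq_log (by linarith),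
    show (a + 2) / 2 + 1 / 4 = a / 2 + 1 / 4 + 1 by ring,
    show (a + 2) / 2 + 3 / 4 = a / 2 + 3 / 4 + 1 by ring,
    Gamma_add_one (by linarith), Gamma_add_one (by linarith),
    ← log_div (by positivity) (by positivity), ← log_div (by positivity) (by positivity),
    ← log_mul (by positivity) (by positivity)]
  congr 1
  field_simp
  ring

lemma tendsto_closedForm_atTop : Tendsto closedForm atTop (𝓝 0) := by
  have hu : Tendsto (fun a : ℝ => a / 2 + 1 / 4) atTop atTop :=
    tendsto_atTop_add_const_right _ _ (tendsto_id.atTop_div_const two_pos)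
  have h := ((tendsto_Gamma_add_half_sq_div_atTop.comp hu).mul
    (tendsto_add_div_self_atTop (1 / 2))).log (by norm_num)
  rw [mul_one, log_one] at h
  refine h.congr' ?_
  filter_upwards [eventually_gt_atTop 0] with a ha
  have hΓ₁ := Gamma_pos_of_pos (by linarith : 0 < a / 2 + 1 / 4)
  rw [closedForm_eq_log ha, Function.comp_apply,
    show a / 2 + 1 / 4 + 1 / 2 = a / 2 + 3 / 4 by ring]
  congr 1
  field_simp
  ring

end FrullaniType

theorem frullani_type_integral (a : ℝ) (ha : 0 < a) :
    ∫ t in Set.Ioi (0 : ℝ),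
        (Real.exp (-(a * t)) / t -
          2 * Real.exp (-((a + 1 / 2) * t)) / (t * (1 + Real.exp (-t)))) =
      2 * Real.log (Real.sqrt 2 * Real.Gamma (a / 2 + 3 / 4) /
        (Real.sqrt a * Real.Gamma (a / 2 + 1 / 4))) := by
  let D b := (∫ t in Ioi 0, FrullaniType.integrand b t) - FrullaniType.closedForm b
  have hshift (b : ℝ) (hb : a ≤ b) : D (b + 2) = D b := by
    have hb₀ : 0 < b := ha.trans_le hb
    linarith [FrullaniType.integral_integrand_sub_integral_integrand_add_two hb₀,
      FrullaniType.closedForm_sub_closedForm_add_two hb₀]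
  have hlim : Tendsto D atTop (𝓝 0) := by
    simpa using FrullaniType.tendsto_integral_integrand_atTop.sub
      FrullaniType.tendsto_closedForm_atTop
  exact sub_eq_zero.1 (eq_of_forall_add_eq_of_tendsto (f := D) two_pos hshift hlim)
end

section
/- For every real a > 0, the integral from 0 to 1 of z^(2a−1)·(1−z)^2/((1+z^2)·(−ln z)) dz equals 2·ln(√2·Γ(a/2 + 3/4)/(√a·Γ(a/2 + 1/4))). -/
/-!
Multiplying numerator and denominator by `1 - z ^ 2` and expanding `1 / (1 - z ^ 4)` as a
geometric series writes the integrand as `∑ n, logKernelTerm (2 * a + 4 * n)`. Since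
`(1 - z) ^ 2 * (1 - z ^ 2) = (1 - z) - (z - z ^ 3) + (z ^ 3 - z ^ 4)`, each term is a combination of
Frullani integrals `∫₀¹ (z ^ (p - 1) - z ^ (q - 1)) / (-log z) dz = log (q / p)`, which follow from
`(z ^ (p - 1) - z ^ (q - 1)) / (-log z) = ∫ₚ^q z ^ (s - 1) ds` and Tonelli. Up to a vanishing
term, the partial sums of the resulting series of logarithms are differences of the Gauss
sequences converging to `log Γ` at `a / 2 + 3 / 4` and `a / 2 + 1 / 4`.
-/

open Real MeasureTheory Set Filter Topology

lemma integral_eq_of_tendsto_sum_integral_of_nonneg {α : Type*} [MeasurableSpace α]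
    {μ : Measure α} {F : ℕ → α → ℝ} {f : α → ℝ} {S : ℝ} (hF : ∀ n, Integrable (F n) μ)
    (hF₀ : ∀ n, 0 ≤ᵐ[μ] F n) (hf : ∀ᵐ x ∂μ, HasSum (F · x) (f x))
    (hS : Tendsto (fun N => ∑ n ∈ Finset.range N, ∫ x, F n x ∂μ) atTop (𝓝 S)) :
    ∫ x, f x ∂μ = S := by
  have hS' : HasSum (fun n => ∫ x, F n x ∂μ) S :=
    (hasSum_iff_tendsto_nat_of_nonneg (fun n => integral_nonneg_of_ae (hF₀ n)) S).2 hS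
  have hnorm : (fun n => ∫ x, ‖F n x‖ ∂μ) = fun n => ∫ x, F n x ∂μ :=
    funext fun n => integral_congr_ae ((hF₀ n).mono fun x hx => Real.norm_of_nonneg hx)
  rw [integral_congr_ae (hf.mono fun x hx => hx.tsum_eq.symm)]
  exact (hasSum_integral_of_summable_integral_norm hF (hnorm ▸ hS'.summable)).unique hS'

section Frullani

variable {p q z : ℝ}

lemma integral_Ioc_rpow_sub_one (hz₀ : 0 < z) (hz₁ : z < 1) (hpq : p ≤ q) :
    ∫ s in Ioc p q, z ^ (s - 1) = (z ^ (p - 1) - z ^ (q - 1)) / -log z := by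
  have hlog : log z ≠ 0 := (log_neg hz₀ hz₁).ne
  have hderiv : ∀ s ∈ uIcc p q, HasDerivAt (fun s => z ^ (s - 1) / log z) (z ^ (s - 1)) s := by
    intro s _
    have := ((hasStrictDerivAt_const_rpow hz₀ (s - 1)).hasDerivAt.comp_sub_const s 1).div_const
      (log z)
    rwa [mul_div_cancel_right₀ _ hlog] at this
  rw [← intervalIntegral.integral_of_le hpq, intervalIntegral.integral_eq_sub_of_hasDerivAt hderiv
    ((continuous_const.rpow (by fun_prop) fun _ => Or.inl hz₀.ne').intervalIntegrable p q),
    div_neg, ← neg_div, neg_sub, sub_div]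

lemma lintegral_Ioo_rpow_sub_one {s : ℝ} (hs : 0 < s) :
    ∫⁻ z in Ioo 0 1, ENNReal.ofReal (z ^ (s - 1)) = ENNReal.ofReal s⁻¹ := by
  have hint : IntegrableOn (fun z : ℝ => z ^ (s - 1)) (Ioc 0 1) :=
    (intervalIntegrable_iff_integrableOn_Ioc_of_le zero_le_one).1
      (intervalIntegral.intervalIntegrable_rpow' (by linarith))
  rw [← ofReal_integral_eq_lintegral_ofReal (hint.mono_set Ioo_subset_Ioc_self)
    (ae_restrict_of_forall_mem measurableSet_Ioo fun z hz => rpow_nonneg hz.1.le _),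
    ← integral_Ioc_eq_integral_Ioo, ← intervalIntegral.integral_of_le zero_le_one,
    integral_rpow (Or.inl (by linarith))]
  simp [hs.ne']

lemma rpow_sub_rpow_div_neg_log_nonneg (hpq : p ≤ q) (hz : z ∈ Ioo 0 1) :
    0 ≤ (z ^ (p - 1) - z ^ (q - 1)) / -log z :=
  div_nonneg (sub_nonneg.2 (rpow_le_rpow_of_exponent_ge hz.1 hz.2.le (by linarith)))
    (neg_nonneg.2 (log_nonpos hz.1.le hz.2.le))

lemma lintegral_rpow_sub_rpow_div_neg_log (hp : 0 < p) (hpq : p ≤ q) :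
    ∫⁻ z in Ioo 0 1, ENNReal.ofReal ((z ^ (p - 1) - z ^ (q - 1)) / -log z) =
      ENNReal.ofReal (log (q / p)) := by
  have hmeas : AEMeasurable (Function.uncurry fun z s : ℝ => ENNReal.ofReal (z ^ (s - 1)))
      ((volume.restrict (Ioo 0 1)).prod (volume.restrict (Ioc p q))) :=
    (measurable_fst.pow (measurable_snd.sub_const 1)).ennreal_ofReal.aemeasurable
  have hinv : IntegrableOn (fun s : ℝ => s⁻¹) (Ioc p q) :=
    (intervalIntegrable_iff_integrableOn_Ioc_of_le hpq).1
      (intervalIntegral.intervalIntegrable_inv (fun s hs => by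
        rw [uIcc_of_le hpq] at hs; exact (hp.trans_le hs.1).ne') continuousOn_id)
  calc ∫⁻ z in Ioo 0 1, ENNReal.ofReal ((z ^ (p - 1) - z ^ (q - 1)) / -log z)
      = ∫⁻ z in Ioo 0 1, ∫⁻ s in Ioc p q, ENNReal.ofReal (z ^ (s - 1)) := by
        refine setLIntegral_congr_fun measurableSet_Ioo fun z hz => ?_
        rw [← integral_Ioc_rpow_sub_one hz.1 hz.2 hpq, ofReal_integral_eq_lintegral_ofReal
          (continuous_const.rpow (by fun_prop) fun _ => Or.inl hz.1.ne').integrableOn_Ioc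
          (ae_of_all _ fun s => rpow_nonneg hz.1.le _)]
    _ = ∫⁻ s in Ioc p q, ∫⁻ z in Ioo 0 1, ENNReal.ofReal (z ^ (s - 1)) :=
        lintegral_lintegral_swap hmeas
    _ = ∫⁻ s in Ioc p q, ENNReal.ofReal s⁻¹ :=
        setLIntegral_congr_fun measurableSet_Ioc fun s hs =>
          lintegral_Ioo_rpow_sub_one (hp.trans hs.1)
    _ = ENNReal.ofReal (log (q / p)) := by
        rw [← ofReal_integral_eq_lintegral_ofReal hinv
          (ae_restrict_of_forall_mem measurableSet_Ioc fun s hs => inv_nonneg.2 (hp.trans hs.1).le),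
          ← intervalIntegral.integral_of_le hpq, integral_inv_of_pos hp (hp.trans_le hpq)]

lemma measurable_rpow_sub_rpow_div_neg_log (p q : ℝ) :
    Measurable fun z : ℝ => (z ^ (p - 1) - z ^ (q - 1)) / -log z := by
  fun_prop

lemma integrableOn_rpow_sub_rpow_div_neg_log (hp : 0 < p) (hpq : p ≤ q) :
    IntegrableOn (fun z : ℝ => (z ^ (p - 1) - z ^ (q - 1)) / -log z) (Ioo 0 1) := by
  refine ⟨(measurable_rpow_sub_rpow_div_neg_log p q).aestronglyMeasurable, ?_⟩
  rw [hasFiniteIntegral_iff_ofReal (ae_restrict_of_forall_mem measurableSet_Ioo fun z hz =>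
    rpow_sub_rpow_div_neg_log_nonneg hpq hz), lintegral_rpow_sub_rpow_div_neg_log hp hpq]
  exact ENNReal.ofReal_lt_top

lemma integral_rpow_sub_rpow_div_neg_log (hp : 0 < p) (hpq : p ≤ q) :
    ∫ z in Ioo 0 1, (z ^ (p - 1) - z ^ (q - 1)) / -log z = log (q / p) := by
  rw [integral_eq_lintegral_of_nonneg_ae (ae_restrict_of_forall_mem measurableSet_Ioo fun z hz =>
    rpow_sub_rpow_div_neg_log_nonneg hpq hz)
    (measurable_rpow_sub_rpow_div_neg_log p q).aestronglyMeasurable,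
    lintegral_rpow_sub_rpow_div_neg_log hp hpq,
    ENNReal.toReal_ofReal (log_nonneg ((one_le_div hp).2 hpq))]

end Frullani

noncomputable def logKernelTerm (c z : ℝ) : ℝ :=
  z ^ (c - 1) * (1 - z) ^ 2 * (1 - z ^ 2) / -log z

section LogKernelTerm

variable {c z : ℝ}

lemma logKernelTerm_eq (hz : 0 < z) :
    logKernelTerm c z = (z ^ (c - 1) - z ^ (c + 1 - 1)) / -log z
      - (z ^ (c + 1 - 1) - z ^ (c + 3 - 1)) / -log z
      + (z ^ (c + 3 - 1) - z ^ (c + 4 - 1)) / -log z := by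
  have hpow : ∀ k : ℕ, z ^ (c + k - 1) = z ^ (c - 1) * z ^ k := fun k => by
    rw [← rpow_add_natCast hz.ne']; ring_nf
  rw [show c + 1 = c + (1 : ℕ) by simp, show c + 3 = c + (3 : ℕ) by simp,
    show c + 4 = c + (4 : ℕ) by simp, hpow, hpow, hpow, logKernelTerm]
  ring

lemma logKernelTerm_nonneg (hz : z ∈ Ioo 0 1) : 0 ≤ logKernelTerm c z := by
  have h : 0 ≤ 1 - z ^ 2 := by nlinarith [hz.1, hz.2]
  exact div_nonneg (mul_nonneg (mul_nonneg (rpow_nonneg hz.1.le _) (sq_nonneg _)) h)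
    (neg_nonneg.2 (log_nonpos hz.1.le hz.2.le))

lemma integrableOn_logKernelTerm (hc : 0 < c) : IntegrableOn (logKernelTerm c) (Ioo 0 1) := by
  refine IntegrableOn.congr_fun ?_ (fun z hz => (logKernelTerm_eq hz.1).symm) measurableSet_Ioo
  exact ((integrableOn_rpow_sub_rpow_div_neg_log hc (by linarith)).sub
    (integrableOn_rpow_sub_rpow_div_neg_log (by linarith) (by linarith))).add
    (integrableOn_rpow_sub_rpow_div_neg_log (by linarith) (by linarith))

lemma integral_logKernelTerm (hc : 0 < c) :
    ∫ z in Ioo 0 1, logKernelTerm c z =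
      log ((c + 1) / c) - log ((c + 3) / (c + 1)) + log ((c + 4) / (c + 3)) := by
  have h₁ := integrableOn_rpow_sub_rpow_div_neg_log (q := c + 1) hc (by linarith)
  have h₂ := integrableOn_rpow_sub_rpow_div_neg_log (p := c + 1) (q := c + 3) (by linarith)
    (by linarith)
  have h₃ := integrableOn_rpow_sub_rpow_div_neg_log (p := c + 3) (q := c + 4) (by linarith)
    (by linarith)
  rw [setIntegral_congr_fun measurableSet_Ioo fun z hz => logKernelTerm_eq hz.1,
    integral_add ?_ h₃, integral_sub h₁ h₂, integral_rpow_sub_rpow_div_neg_log hc (by linarith),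
    integral_rpow_sub_rpow_div_neg_log (by linarith) (by linarith),
    integral_rpow_sub_rpow_div_neg_log (by linarith) (by linarith)]
  exact h₁.sub h₂

lemma integral_logKernelTerm_four_mul {y : ℝ} (hy : 0 < y) :
    ∫ z in Ioo 0 1, logKernelTerm (4 * y) z =
      2 * log (y + 1 / 4) - 2 * log (y + 3 / 4) + (log (y + 1) - log y) := by
  rw [integral_logKernelTerm (by positivity)]
  have h₁ : (4 * y + 1) / (4 * y) = (y + 1 / 4) / y := by field_simp
  have h₂ : (4 * y + 3) / (4 * y + 1) = (y + 3 / 4) / (y + 1 / 4) := by field_simp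
  have h₃ : (4 * y + 4) / (4 * y + 3) = (y + 1) / (y + 3 / 4) := by field_simp
  rw [h₁, h₂, h₃, log_div (by positivity) hy.ne', log_div (by positivity) (by positivity),
    log_div (by positivity) (by positivity)]
  ring

lemma hasSum_logKernelTerm (c : ℝ) (hz : z ∈ Ioo 0 1) :
    HasSum (fun n : ℕ => logKernelTerm (c + 4 * n) z)
      (z ^ (c - 1) * (1 - z) ^ 2 / ((1 + z ^ 2) * -log z)) := by
  obtain ⟨hz₀, hz₁⟩ := hz
  have hz₄ : z ^ 4 < 1 := pow_lt_one₀ hz₀.le hz₁ (by norm_num)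
  have hterm : ∀ n : ℕ, logKernelTerm (c + 4 * n) z = (z ^ 4) ^ n * logKernelTerm c z := by
    intro n
    rw [logKernelTerm, logKernelTerm, show c + 4 * n - 1 = c - 1 + (4 * n : ℕ) by push_cast; ring,
      rpow_add_natCast hz₀.ne', pow_mul]
    ring
  have hsum : (1 - z ^ 4)⁻¹ * logKernelTerm c z =
      z ^ (c - 1) * (1 - z) ^ 2 / ((1 + z ^ 2) * -log z) := by
    have hlog : 0 < -log z := neg_pos.2 (log_neg hz₀ hz₁)
    have : 1 - z ^ 4 ≠ 0 := by linarith
    rw [logKernelTerm]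
    field_simp
    ring
  rw [funext hterm, ← hsum]
  exact (hasSum_geometric_of_lt_one (by positivity) hz₄).mul_right _

end LogKernelTerm

lemma sum_range_succ_log_quarter_shifts_eq (x : ℝ) (n : ℕ) :
    ∑ k ∈ Finset.range (n + 1),
        (2 * log (x + k + 1 / 4) - 2 * log (x + k + 3 / 4) + (log (x + k + 1) - log (x + k))) =
      2 * (BohrMollerup.logGammaSeq (x + 3 / 4) n - BohrMollerup.logGammaSeq (x + 1 / 4) n) +
        (log (x + n + 1) - log n) - log x := by
  have htelescope : ∑ k ∈ Finset.range (n + 1), (log (x + k + 1) - log (x + k)) =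
      log (x + n + 1) - log x := by
    simpa [add_assoc] using Finset.sum_range_sub (fun k : ℕ => log (x + k)) (n + 1)
  simp only [BohrMollerup.logGammaSeq, Finset.sum_add_distrib, Finset.sum_sub_distrib,
    ← Finset.mul_sum, htelescope, add_right_comm x]
  ring

lemma tendsto_sum_range_log_quarter_shifts {x : ℝ} (hx : 0 < x) :
    Tendsto (fun N => ∑ k ∈ Finset.range N,
        (2 * log (x + k + 1 / 4) - 2 * log (x + k + 3 / 4) + (log (x + k + 1) - log (x + k))))
      atTop (𝓝 (2 * (log (Gamma (x + 3 / 4)) - log (Gamma (x + 1 / 4))) - log x)) := by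
  rw [← tendsto_add_atTop_iff_nat 1]
  simp only [sum_range_succ_log_quarter_shifts_eq]
  have hlog : Tendsto (fun n : ℕ => log (x + n + 1) - log n) atTop (𝓝 0) :=
    ((tendsto_log_comp_add_sub_log (x + 1)).comp tendsto_natCast_atTop_atTop).congr fun n => by
      simp only [Function.comp_apply]; ring_nf
  simpa using ((((BohrMollerup.tendsto_log_gamma (by linarith : 0 < x + 3 / 4)).sub
    (BohrMollerup.tendsto_log_gamma (by linarith : 0 < x + 1 / 4))).const_mul 2).add hlog).sub_const
    (log x)

theorem log_kernel_integral (a : ℝ) (ha : 0 < a) :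
    ∫ z in Set.Ioo (0 : ℝ) 1,
        z ^ (2 * a - 1) * (1 - z) ^ 2 / ((1 + z ^ 2) * (-Real.log z)) =
      2 * Real.log (Real.sqrt 2 * Real.Gamma (a / 2 + 3 / 4) /
        (Real.sqrt a * Real.Gamma (a / 2 + 1 / 4))) := by
  have hsums : Tendsto (fun N => ∑ n ∈ Finset.range N,
      ∫ z in Ioo 0 1, logKernelTerm (2 * a + 4 * n) z) atTop
      (𝓝 (2 * (log (Gamma (a / 2 + 3 / 4)) - log (Gamma (a / 2 + 1 / 4))) - log (a / 2))) :=
    (tendsto_sum_range_log_quarter_shifts (half_pos ha)).congr fun N =>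
      Finset.sum_congr rfl fun n _ => by
        rw [show 2 * a + 4 * n = 4 * (a / 2 + n) by ring,
          integral_logKernelTerm_four_mul (by positivity)]
  rw [integral_eq_of_tendsto_sum_integral_of_nonneg
    (fun n => integrableOn_logKernelTerm (by positivity))
    (fun n => ae_restrict_of_forall_mem measurableSet_Ioo fun z hz => logKernelTerm_nonneg hz)
    (ae_restrict_of_forall_mem measurableSet_Ioo fun z hz => hasSum_logKernelTerm (2 * a) hz)
    hsums]
  have hΓ₃ := Gamma_pos_of_pos (by positivity : 0 < a / 2 + 3 / 4)
  have hΓ₁ := Gamma_pos_of_pos (by positivity : 0 < a / 2 + 1 / 4)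
  rw [log_div ha.ne' two_ne_zero, log_div (by positivity) (by positivity),
    log_mul (by positivity) hΓ₃.ne', log_mul (by positivity) hΓ₁.ne', log_sqrt zero_le_two,
    log_sqrt ha.le]
  ring
end

section
/- The function Δ(a) = ∫₀^∞ ln(x² + a²)/cosh(πx) dx is continuous at a = 0, with Δ(0) = 2·∫₀^∞ ln(x)/cosh(πx) dx. -/
/-!
Dominated convergence. For `x > 0` and `|a| ≤ 1` we have
`2 log x ≤ log (x² + a²) ≤ log (x² + 1) ≤ x²`, and `-log x ≤ 2 x^(-1/2)`, so
`|log (x² + a²)| ≤ 4 x^(-1/2) + x²`; since `1 / cosh (π x) ≤ 2 e^(-π x)`, this bound divided by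
`cosh (π x)` is integrable on `(0, ∞)`.
-/

open Real MeasureTheory Set Filter Topology

lemma Real.neg_log_le_rpow_neg_div {x ε : ℝ} (hx : 0 < x) (hε : 0 < ε) :
    -log x ≤ x ^ (-ε) / ε := by
  rw [← log_inv, rpow_neg hx.le, ← inv_rpow hx.le]
  exact log_le_rpow_div (inv_nonneg.2 hx.le) hε

lemma Real.inv_cosh_le_two_mul_exp_neg (x : ℝ) : (cosh x)⁻¹ ≤ 2 * exp (-x) := by
  have h : exp x / 2 ≤ cosh x := by
    rw [cosh_eq]
    linarith [exp_pos (-x)]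
  calc (cosh x)⁻¹ ≤ (exp x / 2)⁻¹ := inv_anti₀ (by positivity) h
    _ = 2 * exp (-x) := by rw [inv_div, exp_neg, div_eq_mul_inv]

lemma integrableOn_rpow_div_cosh {s c : ℝ} (hs : -1 < s) (hc : 0 < c) :
    IntegrableOn (fun x : ℝ => x ^ s / cosh (c * x)) (Ioi 0) := by
  have hdom : IntegrableOn (fun x : ℝ => 2 * (x ^ s * exp (-c * x ^ (1 : ℝ)))) (Ioi 0) :=
    (integrableOn_rpow_mul_exp_neg_mul_rpow hs one_pos hc).const_mul 2
  refine hdom.mono' (Measurable.aestronglyMeasurable (by fun_prop)) ?_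
  filter_upwards [ae_restrict_mem measurableSet_Ioi] with x (hx : 0 < x)
  rw [norm_div, norm_of_nonneg (rpow_nonneg hx.le s), norm_of_nonneg (cosh_pos _).le,
    rpow_one, neg_mul, div_eq_mul_inv, mul_left_comm]
  exact mul_le_mul_of_nonneg_left (inv_cosh_le_two_mul_exp_neg _) (rpow_nonneg hx.le s)

lemma abs_log_sq_add_sq_le {x a : ℝ} (hx : 0 < x) (ha : |a| ≤ 1) :
    |log (x ^ 2 + a ^ 2)| ≤ 4 * x ^ (-(1 / 2) : ℝ) + x ^ (2 : ℝ) := by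
  have ha2 : a ^ 2 ≤ 1 := by nlinarith [sq_abs a, abs_nonneg a]
  have hlower : 2 * log x ≤ log (x ^ 2 + a ^ 2) :=
    calc 2 * log x = log (x ^ 2) := by rw [log_pow]; norm_num
      _ ≤ log (x ^ 2 + a ^ 2) := log_le_log (by positivity) (by linarith [sq_nonneg a])
  have hupper : log (x ^ 2 + a ^ 2) ≤ x ^ 2 :=
    calc log (x ^ 2 + a ^ 2) ≤ x ^ 2 + a ^ 2 - 1 := log_le_sub_one_of_pos (by positivity)
      _ ≤ x ^ 2 := by linarith
  have hlog : -log x ≤ 2 * x ^ (-(1 / 2) : ℝ) := by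
    have := neg_log_le_rpow_neg_div hx (one_half_pos (α := ℝ))
    rwa [div_eq_mul_inv, mul_comm, inv_div, div_one] at this
  rw [rpow_two, abs_le]
  constructor <;> linarith [rpow_nonneg hx.le (-(1 / 2) : ℝ), sq_nonneg x]

theorem delta_continuous_at_zero :
    ContinuousAt (fun a : ℝ => ∫ x in Set.Ioi (0 : ℝ),
        Real.log (x ^ 2 + a ^ 2) / Real.cosh (Real.pi * x)) 0 ∧
    (∫ x in Set.Ioi (0 : ℝ), Real.log (x ^ 2 + (0 : ℝ) ^ 2) / Real.cosh (Real.pi * x)) =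
      2 * ∫ x in Set.Ioi (0 : ℝ), Real.log x / Real.cosh (Real.pi * x) := by
  refine ⟨continuousAt_of_dominated
    (bound := fun x => 4 * (x ^ (-(1 / 2) : ℝ) / cosh (π * x)) + x ^ (2 : ℝ) / cosh (π * x))
    (Eventually.of_forall fun a => Measurable.aestronglyMeasurable (by fun_prop)) ?_ ?_ ?_, ?_⟩
  · filter_upwards [Metric.closedBall_mem_nhds (0 : ℝ) one_pos] with a ha
    filter_upwards [ae_restrict_mem measurableSet_Ioi] with x (hx : 0 < x)
    rw [Metric.mem_closedBall, dist_zero_right, norm_eq_abs] at ha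
    rw [norm_div, norm_of_nonneg (cosh_pos _).le, mul_div_assoc', ← add_div]
    exact div_le_div_of_nonneg_right (abs_log_sq_add_sq_le hx ha) (cosh_pos _).le
  · exact ((integrableOn_rpow_div_cosh (by norm_num) pi_pos).const_mul 4).add
      (integrableOn_rpow_div_cosh (by norm_num) pi_pos)
  · filter_upwards [ae_restrict_mem measurableSet_Ioi] with x (hx : 0 < x)
    exact ((continuousAt_const.add (continuousAt_id.pow 2)).log (by simp [hx.ne'])).div_const _
  · rw [← integral_const_mul]
    refine setIntegral_congr_fun measurableSet_Ioi fun x _ => ?_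
    rw [zero_pow two_ne_zero, add_zero, log_pow, Nat.cast_ofNat, mul_div_assoc]
end
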